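/- arXiv:2507.06900 — 3 statements merged into one kernel-verified Lean document; each statement's English description precedes it below -/
import Mathlib

section
/- Let F be a field and let 𝓜, α, β, γ ∈ F with 𝓜 ≠ 0. Let P, Q, N be 2×2 matrices over F with det(P) = det(Q) = det(N) = 1; set a := P₁₂, b := Q₁₂, c := N₁₂ and assume a, b, c are nonzero, tr(P) = 𝓜·a − α, tr(Q) = 𝓜·b − β, tr(N) = 𝓜·c − γ, Q = P·N − S(β), and a² + b² + c² + α·b·c + β·a·c + γ·a·b = 𝓜·a·b·c. Then the (1,2)-entry of P·Q − S(γ) equals (a² + γ·a·b + b²)/c, and the (1,2)-entry of Q·N − S(α) equals (b² + α·b·c + c²)/a. -/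
/-!
Cayley–Hamilton for a unimodular `2×2` matrix `A` reads `A² = tr(A)·A − 1`. Substituting
`Q = P·N − S(β)` and applying it to `P` on the left (resp. to `N` on the right) gives
`(P·Q − S(γ))₁₂ = tr(P)·b − c − β·a` and `(Q·N − S(α))₁₂ = tr(N)·b − a − β·c`, since `S(k)` has
`(1,2)`-entry `0` and multiplying by it scales a `(1,2)`-entry by `k`. With the prescribed traces these
are the polynomial forms `𝓜ab − αb − βa − c` and `𝓜bc − γb − βc − a` of the two mutations, and the
cluster equation turns them into the stated quotients.
-/

open Matrix

/-- The matrix `S(k) = [[k, 0], [k·𝓜, k]]`. -/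
def Smat {F : Type*} [Field F] (M k : F) : Matrix (Fin 2) (Fin 2) F :=
  !![k, 0; k * M, k]

namespace Matrix

theorem mul_self_fin_two_eq {R : Type*} [CommRing R] [Nontrivial R]
    (A : Matrix (Fin 2) (Fin 2) R) : A * A = A.trace • A - A.det • 1 := by
  have h := A.aeval_self_charpoly
  rw [charpoly_fin_two] at h
  simp only [map_add, map_sub, map_mul, map_pow, Polynomial.aeval_X, Polynomial.aeval_C,
    Algebra.algebraMap_eq_smul_one] at h
  rw [← sub_eq_zero, ← h]
  simp only [smul_mul_assoc, one_mul, sq]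
  abel

end Matrix

section Smat

variable {F : Type*} [Field F] {M k : F}

@[simp] theorem Smat_apply_zero_one : Smat M k 0 1 = 0 := rfl

theorem mul_Smat_apply_zero_one (A : Matrix (Fin 2) (Fin 2) F) :
    (A * Smat M k) 0 1 = k * A 0 1 := by
  simp [Smat, mul_apply, Fin.sum_univ_two, mul_comm]

theorem Smat_mul_apply_zero_one (A : Matrix (Fin 2) (Fin 2) F) :
    (Smat M k * A) 0 1 = k * A 0 1 := by
  simp [Smat, mul_apply, Fin.sum_univ_two]

variable {A B C : Matrix (Fin 2) (Fin 2) F}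

theorem mul_apply_zero_one_of_eq_mul_sub_Smat_left (hA : A.det = 1)
    (hC : C = A * B - Smat M k) :
    (A * C) 0 1 = A.trace * C 0 1 - B 0 1 - k * A 0 1 := by
  have hAC : A * C = A.trace • (C + Smat M k) - B - A * Smat M k := by
    rw [hC, mul_sub, ← mul_assoc, mul_self_fin_two_eq, hA, sub_add_cancel]
    simp [sub_mul]
  simp [hAC, mul_Smat_apply_zero_one]

theorem mul_apply_zero_one_of_eq_mul_sub_Smat_right (hB : B.det = 1)
    (hC : C = A * B - Smat M k) :
    (C * B) 0 1 = B.trace * C 0 1 - A 0 1 - k * B 0 1 := by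
  have hCB : C * B = B.trace • (C + Smat M k) - A - Smat M k * B := by
    rw [hC, sub_mul, mul_assoc, mul_self_fin_two_eq, hB, sub_add_cancel]
    simp [mul_sub]
  simp [hCB, Smat_mul_apply_zero_one]

end Smat

theorem cohn_propagation_entry_general {F : Type*} [Field F] (M α β γ : F)
    (P Q N : Matrix (Fin 2) (Fin 2) F)
    (hPdet : P.det = 1) (hNdet : N.det = 1)
    (a b c : F) (haP : P 0 1 = a) (hbQ : Q 0 1 = b) (hcN : N 0 1 = c)
    (ha : a ≠ 0) (hc : c ≠ 0)
    (htrP : P.trace = M * a - α)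
    (htrN : N.trace = M * c - γ)
    (hQ : Q = P * N - Smat M β)
    (hcluster : a ^ 2 + b ^ 2 + c ^ 2 + α * b * c + β * a * c + γ * a * b
      = M * a * b * c) :
    (P * Q - Smat M γ) 0 1 = (a ^ 2 + γ * a * b + b ^ 2) / c ∧
    (Q * N - Smat M α) 0 1 = (b ^ 2 + α * b * c + c ^ 2) / a := by
  have hPQ := mul_apply_zero_one_of_eq_mul_sub_Smat_left hPdet hQ
  have hQN := mul_apply_zero_one_of_eq_mul_sub_Smat_right hNdet hQ
  rw [htrP, haP, hbQ, hcN] at hPQ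
  rw [htrN, haP, hbQ, hcN] at hQN
  constructor
  · rw [Matrix.sub_apply, Smat_apply_zero_one, sub_zero, hPQ, eq_div_iff hc]
    linear_combination -hcluster
  · rw [Matrix.sub_apply, Smat_apply_zero_one, sub_zero, hQN, eq_div_iff ha]
    linear_combination -hcluster

/-- Part (1) of the propagation theorem for cluster generalized Cohn triples: the
`(1,2)`-entries of `P·Q − S(γ)` and `Q·N − S(α)` are the generalized cluster
mutations of the cluster `(a,b,c)`. -/
theorem cohn_propagation_entry {F : Type*} [Field F] (M α β γ : F) (hM : M ≠ 0)
    (P Q N : Matrix (Fin 2) (Fin 2) F)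
    (hPdet : P.det = 1) (hQdet : Q.det = 1) (hNdet : N.det = 1)
    (a b c : F) (haP : P 0 1 = a) (hbQ : Q 0 1 = b) (hcN : N 0 1 = c)
    (ha : a ≠ 0) (hb : b ≠ 0) (hc : c ≠ 0)
    (htrP : P.trace = M * a - α) (htrQ : Q.trace = M * b - β)
    (htrN : N.trace = M * c - γ)
    (hQ : Q = P * N - Smat M β)
    (hcluster : a ^ 2 + b ^ 2 + c ^ 2 + α * b * c + β * a * c + γ * a * b
      = M * a * b * c) :
    (P * Q - Smat M γ) 0 1 = (a ^ 2 + γ * a * b + b ^ 2) / c ∧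
    (Q * N - Smat M α) 0 1 = (b ^ 2 + α * b * c + c ^ 2) / a :=
  cohn_propagation_entry_general M α β γ P Q N hPdet hNdet a b c haP hbQ hcN ha hc htrP htrN hQ
    hcluster
end

section
/- Let F be a field and let 𝓜, α, β, γ ∈ F with 𝓜 ≠ 0. Let X, Y, Z be 2×2 matrices over F with det(X) = det(Y) = det(Z) = 1, X·Y·Z = T, tr(X) = −α, tr(Y) = −β, tr(Z) = −γ. Set a := X₁₂, b := Y₁₂, c := Z₁₂, assume a, b, c are nonzero and a² + b² + c² + α·b·c + β·a·c + γ·a·b = 𝓜·a·b·c. Then the (1,2)-entry of Y·Z·Y⁻¹ equals (a² + γ·a·b + b²)/c, and the (1,2)-entry of Y⁻¹·X·Y equals (b² + α·b·c + c²)/a. -/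
/-!
Writing `T = 𝓜 E₁₀ - 1` gives `(A T B)₀₁ = 𝓜 A₀₁ B₀₁ - (A B)₀₁` for all `A`, `B`. Since
`Y Z Y⁻¹ = X⁻¹ T Y⁻¹` and `Y⁻¹ X Y = Y⁻¹ T Z⁻¹`, and `(P⁻¹)₀₁ = -P₀₁` in `SL₂`, the polarized
Cayley–Hamilton identity `P Q + Q P = tr P • Q + tr Q • P + (scalar)` turns both entries into
the linear mutations `𝓜ab - αb - βa - c` and `𝓜bc - βc - γb - a`. The relation `X Y Z = T`
also gives `(X Y)₀₁ = c` and `(Y Z)₀₁ = a`. The cluster equation, a quadratic in `c` (resp. `a`)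
whose roots have product `a² + γab + b²` (resp. `b² + αbc + c²`), converts these into the
stated quotients.
-/

open Matrix

/-- The matrix `T = [[−1, 0], [𝓜, −1]]`. -/
def Tmat {F : Type*} [Field F] (M : F) : Matrix (Fin 2) (Fin 2) F :=
  !![-1, 0; M, -1]

namespace Matrix

variable {R : Type*} [CommRing R]

theorem inv_apply_zero_one_of_det_eq_one {A : Matrix (Fin 2) (Fin 2) R} (hA : A.det = 1) :
    A⁻¹ 0 1 = -A 0 1 := by
  simp [inv_def, hA, adjugate_fin_two]

theorem mul_apply_zero_one_add_mul_apply_zero_one (A B : Matrix (Fin 2) (Fin 2) R) :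
    (A * B) 0 1 + (B * A) 0 1 = A.trace * B 0 1 + B.trace * A 0 1 := by
  simp only [mul_apply, Fin.sum_univ_two, trace_fin_two]
  ring

end Matrix

section Tmat

variable {F : Type*} [Field F] (M : F)

theorem mul_Tmat_mul_apply_zero_one (A B : Matrix (Fin 2) (Fin 2) F) :
    (A * Tmat M * B) 0 1 = M * A 0 1 * B 0 1 - (A * B) 0 1 := by
  simp only [Tmat, mul_apply, Fin.sum_univ_two, of_apply, cons_val', cons_val_zero,
    cons_val_one, empty_val', cons_val_fin_one]
  ring

theorem Tmat_mul_apply_zero_one (A : Matrix (Fin 2) (Fin 2) F) :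
    (Tmat M * A) 0 1 = -A 0 1 := by
  simpa using mul_Tmat_mul_apply_zero_one M 1 A

theorem mul_Tmat_apply_zero_one (A : Matrix (Fin 2) (Fin 2) F) :
    (A * Tmat M) 0 1 = -A 0 1 := by
  simpa using mul_Tmat_mul_apply_zero_one M A 1

theorem inv_mul_Tmat_mul_inv_apply_zero_one {P Q : Matrix (Fin 2) (Fin 2) F}
    (hP : P.det = 1) (hQ : Q.det = 1) :
    (P⁻¹ * Tmat M * Q⁻¹) 0 1
      = M * P 0 1 * Q 0 1 + P.trace * Q 0 1 + Q.trace * P 0 1 - (P * Q) 0 1 := by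
  have hQP : (Q * P).det = 1 := by rw [det_mul, hP, hQ, one_mul]
  rw [mul_Tmat_mul_apply_zero_one, inv_apply_zero_one_of_det_eq_one hP,
    inv_apply_zero_one_of_det_eq_one hQ, ← Matrix.mul_inv_rev, inv_apply_zero_one_of_det_eq_one hQP]
  linear_combination mul_apply_zero_one_add_mul_apply_zero_one P Q

variable {X Y Z : Matrix (Fin 2) (Fin 2) F}

theorem mul_eq_Tmat_mul_inv (hZ : Z.det = 1) (hT : X * Y * Z = Tmat M) :
    X * Y = Tmat M * Z⁻¹ := by
  rw [← hT, mul_nonsing_inv_cancel_right _ _ (by simp [hZ])]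

theorem mul_eq_inv_mul_Tmat (hX : X.det = 1) (hT : X * Y * Z = Tmat M) :
    Y * Z = X⁻¹ * Tmat M := by
  rw [← hT, mul_assoc, nonsing_inv_mul_cancel_left _ _ (by simp [hX])]

theorem mul_apply_zero_one_of_mul_mul_eq_Tmat_left (hZ : Z.det = 1) (hT : X * Y * Z = Tmat M) :
    (X * Y) 0 1 = Z 0 1 := by
  rw [mul_eq_Tmat_mul_inv M hZ hT, Tmat_mul_apply_zero_one, inv_apply_zero_one_of_det_eq_one hZ,
    neg_neg]

theorem mul_apply_zero_one_of_mul_mul_eq_Tmat_right (hX : X.det = 1) (hT : X * Y * Z = Tmat M) :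
    (Y * Z) 0 1 = X 0 1 := by
  rw [mul_eq_inv_mul_Tmat M hX hT, mul_Tmat_apply_zero_one, inv_apply_zero_one_of_det_eq_one hX,
    neg_neg]

end Tmat

theorem mm_propagation_entry_general {F : Type*} [Field F] (M α β γ : F)
    (X Y Z : Matrix (Fin 2) (Fin 2) F)
    (hX : X.det = 1) (hY : Y.det = 1) (hZ : Z.det = 1)
    (hT : X * Y * Z = Tmat M)
    (htrX : X.trace = -α) (htrY : Y.trace = -β) (htrZ : Z.trace = -γ)
    (a b c : F) (haX : X 0 1 = a) (hbY : Y 0 1 = b) (hcZ : Z 0 1 = c)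
    (ha : a ≠ 0) (hc : c ≠ 0)
    (hcluster : a ^ 2 + b ^ 2 + c ^ 2 + α * b * c + β * a * c + γ * a * b
      = M * a * b * c) :
    (Y * Z * Y⁻¹) 0 1 = (a ^ 2 + γ * a * b + b ^ 2) / c ∧
    (Y⁻¹ * X * Y) 0 1 = (b ^ 2 + α * b * c + c ^ 2) / a := by
  constructor
  · rw [mul_eq_inv_mul_Tmat M hX hT, inv_mul_Tmat_mul_inv_apply_zero_one M hX hY,
      mul_apply_zero_one_of_mul_mul_eq_Tmat_left M hZ hT, htrX, htrY, haX, hbY, hcZ,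
      eq_div_iff hc]
    linear_combination -hcluster
  · rw [mul_assoc, mul_eq_Tmat_mul_inv M hZ hT, ← mul_assoc, inv_mul_Tmat_mul_inv_apply_zero_one M hY hZ,
      mul_apply_zero_one_of_mul_mul_eq_Tmat_right M hX hT, htrY, htrZ, haX, hbY, hcZ,
      eq_div_iff ha]
    linear_combination -hcluster

/-- Part (1) of the propagation theorem for cluster Markov-monodromy triples: the
`(1,2)`-entries of `Y·Z·Y⁻¹` and `Y⁻¹·X·Y` are the generalized cluster mutations
of the cluster `(a,b,c)`. -/
theorem mm_propagation_entry {F : Type*} [Field F] (M α β γ : F) (hM : M ≠ 0)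
    (X Y Z : Matrix (Fin 2) (Fin 2) F)
    (hX : X.det = 1) (hY : Y.det = 1) (hZ : Z.det = 1)
    (hT : X * Y * Z = Tmat M)
    (htrX : X.trace = -α) (htrY : Y.trace = -β) (htrZ : Z.trace = -γ)
    (a b c : F) (haX : X 0 1 = a) (hbY : Y 0 1 = b) (hcZ : Z 0 1 = c)
    (ha : a ≠ 0) (hb : b ≠ 0) (hc : c ≠ 0)
    (hcluster : a ^ 2 + b ^ 2 + c ^ 2 + α * b * c + β * a * c + γ * a * b
      = M * a * b * c) :
    (Y * Z * Y⁻¹) 0 1 = (a ^ 2 + γ * a * b + b ^ 2) / c ∧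
    (Y⁻¹ * X * Y) 0 1 = (b ^ 2 + α * b * c + c ^ 2) / a :=
  mm_propagation_entry_general M α β γ X Y Z hX hY hZ hT htrX htrY htrZ a b c haX hbY hcZ ha hc
    hcluster
end

section
/- Let F be a field and let 𝓜, α, β, γ ∈ F with 𝓜 ≠ 0. Let X, Y, Z be 2×2 matrices over F with det(X) = det(Y) = det(Z) = 1, X·Y·Z = T, tr(X) = −α, tr(Y) = −β, tr(Z) = −γ. Set a := X₁₂, b := Y₁₂, c := Z₁₂, assume a, b, c are nonzero and a² + b² + c² + α·b·c + β·a·c + γ·a·b = 𝓜·a·b·c. Then the (1,2)-entries of Z⁻¹·Y·Z and of X·Y·X⁻¹ are both equal to (a² + β·a·c + c²)/b. -/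
open Matrix

/-!
With `W = X Z`, the relation `X Y Z = T` gives `Z⁻¹ Y Z = W⁻¹ T` and `X Y X⁻¹ = T W⁻¹`; as
`T₁₂ = 0`, `T₁₁ = T₂₂ = -1` and `(W⁻¹)₁₂ = -W₁₂`, both have `(1,2)`-entry `W₁₂`, so it remains to
show `W₁₂ b = a² + βac + c²`. Writing `T = -1 + 𝓜 E₂₁`, `Y = X⁻¹ T Z⁻¹` is `-(Z X)⁻¹` plus `𝓜` times
a rank-one matrix, whence `b = (Z X)₁₂ + 𝓜ac` and `β = tr W + 𝓜 W₁₂`. The claim is then the `SL₂`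
identity `(X Z)₁₂ (Z X)₁₂ = a² + c² + ac tr (X Z)`.
-/

namespace Matrix

variable {R : Type*} [CommRing R]

theorem inv_eq_adjugate_of_det_eq_one {n : Type*} [Fintype n] [DecidableEq n]
    {A : Matrix n n R} (h : A.det = 1) : A⁻¹ = A.adjugate := by
  rw [inv_def, h, Ring.inverse_one, one_smul]

section FinTwo

variable {X Z : Matrix (Fin 2) (Fin 2) R}

theorem mul_apply_zero_one_mul_mul_apply_zero_one (hX : X.det = 1) (hZ : Z.det = 1) :
    (X * Z) 0 1 * (Z * X) 0 1
      = X 0 1 ^ 2 + Z 0 1 ^ 2 + X 0 1 * Z 0 1 * (X * Z).trace := by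
  rw [det_fin_two] at hX hZ
  simp only [mul_apply, Fin.sum_univ_two, trace_fin_two]
  linear_combination (Z 0 1) ^ 2 * hX + (X 0 1) ^ 2 * hZ

end FinTwo

section Conj

variable {n : Type*} [Fintype n] [DecidableEq n] {X Y Z : Matrix n n R}

theorem inv_mul_mul_eq_mul_inv_mul (hX : IsUnit X.det) :
    Z⁻¹ * Y * Z = (X * Z)⁻¹ * (X * Y * Z) := by
  rw [mul_inv_rev, Matrix.mul_assoc Z⁻¹ X⁻¹, Matrix.mul_assoc X,
    nonsing_inv_mul_cancel_left _ _ hX, Matrix.mul_assoc]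

theorem mul_mul_inv_eq_mul_mul_inv (hZ : IsUnit Z.det) :
    X * Y * X⁻¹ = X * Y * Z * (X * Z)⁻¹ := by
  rw [mul_inv_rev, ← Matrix.mul_assoc, mul_nonsing_inv_cancel_right _ _ hZ]

end Conj

end Matrix

section Tmat

variable {F : Type*} [Field F] (M : F) {W X Y Z : Matrix (Fin 2) (Fin 2) F}

theorem inv_mul_Tmat_apply_zero_one (hW : W.det = 1) : (W⁻¹ * Tmat M) 0 1 = W 0 1 := by
  simp [inv_eq_adjugate_of_det_eq_one hW, adjugate_fin_two, Tmat, mul_apply, Fin.sum_univ_two]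

theorem Tmat_mul_inv_apply_zero_one (hW : W.det = 1) : (Tmat M * W⁻¹) 0 1 = W 0 1 := by
  simp [inv_eq_adjugate_of_det_eq_one hW, adjugate_fin_two, Tmat, mul_apply, Fin.sum_univ_two]

theorem inv_mul_Tmat_mul_inv_apply_zero_one_s14 (hX : X.det = 1) (hZ : Z.det = 1) :
    (X⁻¹ * Tmat M * Z⁻¹) 0 1 = (Z * X) 0 1 + M * X 0 1 * Z 0 1 := by
  rw [inv_eq_adjugate_of_det_eq_one hX, inv_eq_adjugate_of_det_eq_one hZ, adjugate_fin_two,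
    adjugate_fin_two, Tmat]
  simp only [mul_apply, Fin.sum_univ_two, of_apply, cons_val', cons_val_zero, cons_val_one,
    cons_val_fin_one]
  ring

theorem trace_inv_mul_Tmat_mul_inv (hX : X.det = 1) (hZ : Z.det = 1) :
    (X⁻¹ * Tmat M * Z⁻¹).trace = -(X * Z).trace - M * (X * Z) 0 1 := by
  rw [inv_eq_adjugate_of_det_eq_one hX, inv_eq_adjugate_of_det_eq_one hZ, adjugate_fin_two,
    adjugate_fin_two, Tmat]
  simp only [trace_fin_two, mul_apply, Fin.sum_univ_two, of_apply, cons_val', cons_val_zero,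
    cons_val_one, cons_val_fin_one]
  ring

variable {M}

theorem mul_apply_zero_one_mul_apply_zero_one_of_mul_mul_eq_Tmat (hX : X.det = 1)
    (hZ : Z.det = 1) (hT : X * Y * Z = Tmat M) :
    (X * Z) 0 1 * Y 0 1 = X 0 1 ^ 2 - Y.trace * X 0 1 * Z 0 1 + Z 0 1 ^ 2 := by
  have hY : Y = X⁻¹ * Tmat M * Z⁻¹ := by
    rw [← hT, Matrix.mul_assoc X, nonsing_inv_mul_cancel_left _ _ (by simp [hX]),
      mul_nonsing_inv_cancel_right _ _ (by simp [hZ])]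
  rw [hY, inv_mul_Tmat_mul_inv_apply_zero_one_s14 M hX hZ, trace_inv_mul_Tmat_mul_inv M hX hZ]
  linear_combination mul_apply_zero_one_mul_mul_apply_zero_one hX hZ

end Tmat

theorem mm_inverse_propagation_entry_general {F : Type*} [Field F] (M β : F)
    (X Y Z : Matrix (Fin 2) (Fin 2) F)
    (hX : X.det = 1) (hZ : Z.det = 1)
    (hT : X * Y * Z = Tmat M)
    (htrY : Y.trace = -β)
    (a b c : F) (haX : X 0 1 = a) (hbY : Y 0 1 = b) (hcZ : Z 0 1 = c)
    (hb : b ≠ 0) :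
    (Z⁻¹ * Y * Z) 0 1 = (a ^ 2 + β * a * c + c ^ 2) / b ∧
    (X * Y * X⁻¹) 0 1 = (a ^ 2 + β * a * c + c ^ 2) / b := by
  have hW : (X * Z).det = 1 := by rw [det_mul, hX, hZ, one_mul]
  have hWb : (X * Z) 0 1 = (a ^ 2 + β * a * c + c ^ 2) / b := by
    rw [eq_div_iff hb, ← hbY, mul_apply_zero_one_mul_apply_zero_one_of_mul_mul_eq_Tmat hX hZ hT,
      htrY, haX, hcZ]
    ring
  have hXu : IsUnit X.det := by simp [hX]
  have hZu : IsUnit Z.det := by simp [hZ]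
  rw [inv_mul_mul_eq_mul_inv_mul hXu, mul_mul_inv_eq_mul_mul_inv hZu, hT,
    inv_mul_Tmat_apply_zero_one M hW, Tmat_mul_inv_apply_zero_one M hW]
  exact ⟨hWb, hWb⟩

/-- Part (1) of the inverse propagation theorem for cluster Markov-monodromy
triples: the `(1,2)`-entries of `Z⁻¹·Y·Z` and `X·Y·X⁻¹` are both
`(a² + βac + c²)/b`. -/
theorem mm_inverse_propagation_entry {F : Type*} [Field F] (M α β γ : F) (hM : M ≠ 0)
    (X Y Z : Matrix (Fin 2) (Fin 2) F)
    (hX : X.det = 1) (hY : Y.det = 1) (hZ : Z.det = 1)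
    (hT : X * Y * Z = Tmat M)
    (htrX : X.trace = -α) (htrY : Y.trace = -β) (htrZ : Z.trace = -γ)
    (a b c : F) (haX : X 0 1 = a) (hbY : Y 0 1 = b) (hcZ : Z 0 1 = c)
    (ha : a ≠ 0) (hb : b ≠ 0) (hc : c ≠ 0)
    (hcluster : a ^ 2 + b ^ 2 + c ^ 2 + α * b * c + β * a * c + γ * a * b
      = M * a * b * c) :
    (Z⁻¹ * Y * Z) 0 1 = (a ^ 2 + β * a * c + c ^ 2) / b ∧
    (X * Y * X⁻¹) 0 1 = (a ^ 2 + β * a * c + c ^ 2) / b :=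
  mm_inverse_propagation_entry_general M β X Y Z hX hZ hT htrY a b c haX hbY hcZ hb
end
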